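/- Let p be a prime, d ≥ 1 an integer, F the free group on d generators, and U a fully invariant subgroup of F such that G = F/U is a finite non-trivial p-group, say of order p^g. Then: (i) U ≤ F_2 = F^p[F,F], and G is minimally generated by d elements; (ii) the natural homomorphism Aut(G) → Aut(G/Φ(G)) is surjective (so the sequence 1 → K(G) → Aut(G) → GL(d, F_p) → 1 is exact, where K(G) is the kernel and Aut(G/Φ(G)) ≅ GL(d, F_p)); (iii) |K(G)| = p^{d(g−d)}; and (iv) more generally, for any normal subgroup L of G with L ≤ Φ(G) and |L| = p^m, the number of automorphisms of G that act trivially on G/L equals p^{dm}. -/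

import Mathlib

/-- `pStep p H = H^p [H, G]`: the subgroup generated by all `p`-th powers of elements of `H`
together with all commutators `[x, y]` with `x ∈ H` and `y ∈ G`. -/
def pStep (p : ℕ) {G : Type*} [Group G] (H : Subgroup G) : Subgroup G :=
  Subgroup.closure ((fun g => g ^ p) '' (H : Set G)) ⊔ ⁅H, (⊤ : Subgroup G)⁆

private def lowerPSeriesAux (p : ℕ) (G : Type*) [Group G] : ℕ → Subgroup G
  | 0 => ⊤
  | (k + 1) => pStep p (lowerPSeriesAux p G k)

/-- The lower `p`-series of `G`, indexed as in the paper: `G_1 = G` and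
`G_{i+1} = G_i^p [G_i, G]`.  (The value at `0` is junk, equal to `G_1 = G`.) -/
def lowerPSeries (p : ℕ) (G : Type*) [Group G] (i : ℕ) : Subgroup G :=
  lowerPSeriesAux p G (i - 1)

theorem pStep_le (p : ℕ) {G : Type*} [Group G] {H : Subgroup G} (hH : H.Normal) :
    pStep p H ≤ H := by
  apply sup_le
  · rw [Subgroup.closure_le]
    rintro _ ⟨h, hh, rfl⟩
    exact H.pow_mem hh p
  · exact Subgroup.commutator_le_left H ⊤

open scoped commutatorElement

theorem pStep_normal (p : ℕ) {G : Type*} [Group G] {H : Subgroup G} (hH : H.Normal) :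
    (pStep p H).Normal := by
  constructor
  intro x hx g
  have hxH : x ∈ H := pStep_le p hH hx
  have : g * x * g⁻¹ = ⁅g, x⁆ * x := by group
  rw [this]
  refine Subgroup.mul_mem _ ?_ hx
  refine le_sup_right (α := Subgroup G) ?_
  have hcomm : (⁅(⊤ : Subgroup G), H⁆ : Subgroup G) = ⁅H, (⊤ : Subgroup G)⁆ :=
    Subgroup.commutator_comm ⊤ H
  rw [← hcomm]
  exact Subgroup.commutator_mem_commutator (Subgroup.mem_top g) hxH

instance lowerPSeries_normal (p : ℕ) (G : Type*) [Group G] (i : ℕ) :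
    (lowerPSeries p G i).Normal := by
  rw [lowerPSeries]
  generalize i - 1 = k
  induction k with
  | zero => show (⊤ : Subgroup G).Normal; infer_instance
  | succ k ih => exact pStep_normal p ih

/-- A group is minimally generated by `d` elements if it is generated by some `d` elements
but by no fewer. -/
def MinGenBy (G : Type*) [Group G] (d : ℕ) : Prop :=
  (∃ S : Finset G, S.card = d ∧ Subgroup.closure (S : Set G) = ⊤) ∧
    ∀ S : Finset G, Subgroup.closure (S : Set G) = ⊤ → d ≤ S.card

/-- A subgroup is fully invariant if every endomorphism of the group maps it into itself. -/
def FullyInvariant {G : Type*} [Group G] (U : Subgroup G) : Prop :=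
  ∀ φ : G →* G, Subgroup.map φ U ≤ U

/-!
Write `F₂ = F^p[F,F]`; reduction modulo `F₂` is the map `β : F → 𝔽_p^d` sending the `i`-th free
generator to the `i`-th unit vector, and `ker β = F₂`. Since `U` is fully invariant, `β(U)` is
invariant under every endomorphism of `𝔽_p^d` (these lift to `F`), so it is `0` or everything;
the latter would force `G = G^p[G,G] ≤ Φ(G)`, impossible for a non-trivial finite `p`-group.
Hence `U ≤ F₂`, and `β` induces `G/Φ(G) = G/G^p[G,G] ≅ 𝔽_p^d`.

Every map from the generators into `G` extends to an endomorphism of `G`, and an endomorphism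
that is surjective modulo `Φ(G)` is an automorphism. Lifting an automorphism of `G/Φ(G)` on the
generators gives (ii); for `L ≤ Φ(G)` normal, sending each generator `xᵢ` to `ℓᵢ xᵢ` with
`ℓᵢ ∈ L` arbitrary gives a bijection between `L^d` and the automorphisms trivial on `G/L`,
which is (iv), and (iii) is the case `L = Φ(G)`.
-/

open Subgroup

section PStep

variable (p : ℕ) {G H : Type*} [Group G] [Group H]

instance pStep_top_normal : (pStep p (⊤ : Subgroup G)).Normal :=
  pStep_normal p inferInstance

theorem pStep_top_le_iff {N : Subgroup G} :
    pStep p ⊤ ≤ N ↔ (∀ g : G, g ^ p ∈ N) ∧ ∀ a b : G, ⁅a, b⁆ ∈ N := by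
  simp only [pStep, sup_le_iff, closure_le, commutator_le, Set.image_subset_iff, coe_top,
    Set.univ_subset_iff, Set.eq_univ_iff_forall, Set.mem_preimage, SetLike.mem_coe, mem_top,
    forall_const]

theorem pStep_top_le_ker {f : G →* H} (hpow : ∀ g, f g ^ p = 1)
    (hcomm : ∀ a b, f a * f b = f b * f a) : pStep p ⊤ ≤ f.ker :=
  (pStep_top_le_iff p).2 ⟨fun g => by simp [hpow], fun a b => by
    simp [commutatorElement_eq_one_iff_mul_comm, hcomm]⟩

theorem map_pStep {f : G →* H} (hf : Function.Surjective f) (K : Subgroup G) :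
    (pStep p K).map f = pStep p (K.map f) := by
  rw [pStep, pStep, Subgroup.map_sup, map_commutator, MonoidHom.map_closure,
    map_top_of_surjective f hf, Set.image_image, coe_map, Set.image_image]
  simp only [map_pow]

instance commGroup_quotient_pStep_top : CommGroup (G ⧸ pStep p (⊤ : Subgroup G)) where
  mul_comm := by
    rintro ⟨a⟩ ⟨b⟩
    refine QuotientGroup.eq_iff_div_mem.2 ?_
    have h : a * b / (b * a) = ⁅a, b⁆ := by
      rw [commutatorElement_def, div_eq_mul_inv, mul_inv_rev, ← mul_assoc]
    exact h ▸ ((pStep_top_le_iff p).1 le_rfl).2 a b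

end PStep

section Frattini

variable {p : ℕ} [hp : Fact p.Prime] {G H : Type*} [Group G] [Group H]

theorem isSimpleOrder_subgroup_quotient_of_isCoatom {M : Subgroup G} [M.Normal] (hM : IsCoatom M) :
    IsSimpleOrder (Subgroup (G ⧸ M)) :=
  OrderIso.isSimpleOrder_iff (β := Set.Ici M) (QuotientGroup.comapMk'OrderIso M) |>.2
    (Set.isSimpleOrder_Ici_iff_isCoatom.2 hM)

theorem IsPGroup.card_quotient_of_isCoatom [Finite G] (hG : IsPGroup p G) {M : Subgroup G}
    [M.Normal] (hM : IsCoatom M) : Nat.card (G ⧸ M) = p := by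
  have := isSimpleOrder_subgroup_quotient_of_isCoatom hM
  have : Nontrivial (G ⧸ M) := Subgroup.nontrivial_iff.1 inferInstance
  obtain ⟨y, hy⟩ := exists_prime_orderOf_dvd_card' (G := G ⧸ M) p
    ((hG.to_quotient M).card_eq_or_dvd.resolve_left Finite.one_lt_card.ne')
  have hy1 : y ≠ 1 := fun h => hp.out.one_lt.ne' (by rw [← hy, h, orderOf_one])
  have htop : zpowers y = ⊤ := (eq_bot_or_eq_top _).resolve_left (by simpa using hy1)
  rw [← card_top, ← htop, Nat.card_zpowers, hy]

theorem IsPGroup.pStep_top_le_frattini [Finite G] (hG : IsPGroup p G) :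
    pStep p ⊤ ≤ frattini G := by
  refine le_iInf₂ fun M hM => ?_
  have := hG.isNilpotent
  have : M.Normal := Group.normalizerCondition_of_isNilpotent.normal_of_coatom M hM
  have hcard := hG.card_quotient_of_isCoatom hM
  have : IsCyclic (G ⧸ M) := isCyclic_of_prime_card hcard
  let _ := IsCyclic.commGroup (α := G ⧸ M)
  simpa using pStep_top_le_ker p (f := QuotientGroup.mk' M)
    (fun g => hcard ▸ pow_card_eq_one') (fun a b => mul_comm _ _)

theorem isCoatom_ker_of_prime_card {f : G →* H} (hf : Function.Surjective f)
    (hH : (Nat.card H).Prime) : IsCoatom f.ker := by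
  have : Fact (Nat.card H).Prime := ⟨hH⟩
  have : Finite H := Nat.finite_of_card_ne_zero hH.ne_zero
  have : Nontrivial H := Finite.one_lt_card_iff_nontrivial.1 hH.one_lt
  refine isCoatom_comap_of_surjective hf ⟨bot_ne_top, fun K hK => ?_⟩
  exact (eq_bot_or_eq_top_of_prime_card K).resolve_left hK.ne'

theorem frattini_le_ker_of_surjective {ι : Type*} {f : G →* Multiplicative (ι → ZMod p)}
    (hf : Function.Surjective f) : frattini G ≤ f.ker := by
  classical
  intro x hx
  refine MonoidHom.mem_ker.2 (funext fun i => ?_)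
  let c := (AddMonoidHom.toMultiplicative (Pi.evalAddMonoidHom (fun _ => ZMod p) i)).comp f
  have hc : Function.Surjective c := fun z => by
    obtain ⟨y, hy⟩ := hf (Multiplicative.ofAdd (Pi.single i z.toAdd))
    exact ⟨y, by simp [c, hy]⟩
  exact frattini_le_coatom (isCoatom_ker_of_prime_card hc (by simpa using hp.out)) hx

theorem frattini_ne_top [Nontrivial G] [IsCoatomic (Subgroup G)] : frattini G ≠ ⊤ := by
  obtain ⟨M, hM, -⟩ := (eq_top_or_exists_le_coatom (⊥ : Subgroup G)).resolve_left bot_ne_top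
  exact ne_top_of_le_ne_top hM.1 (frattini_le_coatom hM)

theorem surjective_of_surjective_mk_frattini_comp [IsCoatomic (Subgroup G)] {θ : H →* G}
    (hθ : Function.Surjective ((QuotientGroup.mk' (frattini G)).comp θ)) :
    Function.Surjective θ := by
  refine MonoidHom.range_eq_top.1 (frattini_nongenerating (eq_top_iff.2 fun g _ => ?_))
  obtain ⟨h, hh⟩ := hθ g
  have : (θ h)⁻¹ * g ∈ frattini G := QuotientGroup.eq.1 hh
  simpa using mul_mem_sup (θ.mem_range.2 ⟨h, rfl⟩) this

end Frattini

def FreeGroup.toModP (p : ℕ) (ι : Type*) [DecidableEq ι] :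
    FreeGroup ι →* Multiplicative (ι → ZMod p) :=
  FreeGroup.lift fun i => Multiplicative.ofAdd (Pi.single i 1)

@[simp]
theorem FreeGroup.toModP_of (p : ℕ) {ι : Type*} [DecidableEq ι] (i : ι) :
    toModP p ι (of i) = Multiplicative.ofAdd (Pi.single i 1) :=
  FreeGroup.lift_apply_of

def zmodPowProd (p : ℕ) [NeZero p] {ι : Type*} [Fintype ι] {Q : Type*} [CommGroup Q]
    (hQ : ∀ q : Q, q ^ p = 1) (x : ι → Q) : Multiplicative (ι → ZMod p) →* Q where
  toFun v := ∏ i, x i ^ (v.toAdd i).val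
  map_one' := by simp
  map_mul' v w := by
    simp only [toAdd_mul, Pi.add_apply, ZMod.val_add, ← pow_eq_pow_mod _ (hQ _), pow_add,
      Finset.prod_mul_distrib]

section ModP

variable (p : ℕ) [hp : Fact p.Prime] {ι : Type*} [DecidableEq ι]

theorem zmodPowProd_single [Fintype ι] {Q : Type*} [CommGroup Q] (hQ : ∀ q : Q, q ^ p = 1)
    (x : ι → Q) (i : ι) : zmodPowProd p hQ x (Multiplicative.ofAdd (Pi.single i 1)) = x i := by
  have : Fact (1 < p) := ⟨hp.out.one_lt⟩
  simp [zmodPowProd, Pi.single_apply, apply_ite ZMod.val, ZMod.val_one]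

variable (ι) [Fintype ι]

theorem FreeGroup.toModP_surjective : Function.Surjective (toModP p ι) := by
  have hsingle (i : ι) (a : ZMod p) : Multiplicative.ofAdd (Pi.single i a) ∈ (toModP p ι).range :=
    ⟨of i ^ a.val, by simp [← ofAdd_nsmul, ← Pi.single_smul]⟩
  intro v
  rw [← MonoidHom.mem_range, ← ofAdd_toAdd v, ← Finset.univ_sum_single v.toAdd, ofAdd_sum]
  exact prod_mem fun i _ => hsingle i _

theorem FreeGroup.ker_toModP : (toModP p ι).ker = pStep p ⊤ := by
  refine le_antisymm (fun w hw => ?_) (pStep_top_le_ker p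
    (fun _ => congrArg Multiplicative.ofAdd (ZModModule.char_nsmul_eq_zero p _))
    fun _ _ => mul_comm _ _)
  have hpow (q : FreeGroup ι ⧸ pStep p ⊤) : q ^ p = 1 := by
    obtain ⟨g, rfl⟩ := QuotientGroup.mk_surjective q
    exact (QuotientGroup.eq_one_iff _).2 (((pStep_top_le_iff p).1 le_rfl).1 g)
  have hinv : (zmodPowProd p hpow fun i => (of i : FreeGroup ι ⧸ pStep p ⊤)).comp
      (toModP p ι) = QuotientGroup.mk' _ :=
    FreeGroup.ext_hom _ _ fun i => by simp [zmodPowProd_single]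
  rw [← QuotientGroup.eq_one_iff, ← QuotientGroup.mk'_apply, ← hinv, MonoidHom.comp_apply,
    MonoidHom.mem_ker.1 hw, _root_.map_one]

end ModP

section ElementaryAbelian

variable {p : ℕ} [Fact p.Prime] {ι : Type*}

theorem eq_bot_or_eq_top_of_forall_map_le {W : Subgroup (Multiplicative (ι → ZMod p))}
    (hW : ∀ f : Multiplicative (ι → ZMod p) →* Multiplicative (ι → ZMod p), W.map f ≤ W) :
    W = ⊥ ∨ W = ⊤ := by
  refine W.bot_or_exists_ne_one.imp_right fun ⟨w, hwW, hw⟩ => eq_top_iff.2 fun u _ => ?_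
  obtain ⟨i, hi⟩ : ∃ i, w.toAdd i ≠ 0 := Function.ne_iff.1 hw
  let f : (ι → ZMod p) →ₗ[ZMod p] ι → ZMod p :=
    (LinearMap.toSpanSingleton (ZMod p) _ u.toAdd).comp ((w.toAdd i)⁻¹ • LinearMap.proj i)
  have hf : f w.toAdd = u.toAdd := by simp [f, inv_mul_cancel₀ hi]
  exact hW (AddMonoidHom.toMultiplicative f.toAddMonoidHom)
    ⟨w, hwW, congrArg Multiplicative.ofAdd hf⟩

theorem card_le_card_of_surjective_of_closure_eq_top [Fintype ι] {G : Type*} [Group G]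
    {f : G →* Multiplicative (ι → ZMod p)} (hf : Function.Surjective f) {S : Finset G}
    (hS : closure (S : Set G) = ⊤) : Fintype.card ι ≤ S.card := by
  classical
  let T := S.image fun g => (f g).toAdd
  have hT : Submodule.span (ZMod p) (T : Set (ι → ZMod p)) = ⊤ := by
    have : closure (S : Set G) ≤
        (AddSubgroup.toSubgroup (Submodule.span (ZMod p) (T : Set _)).toAddSubgroup).comap f := by
      rw [closure_le]
      intro g hg
      exact Submodule.subset_span (Finset.mem_image_of_mem _ hg)
    rw [hS] at this
    refine eq_top_iff.2 fun v _ => ?_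
    obtain ⟨g, hg⟩ := hf (.ofAdd v)
    simpa [hg] using this (mem_top g)
  calc Fintype.card ι = Module.finrank (ZMod p) (ι → ZMod p) :=
      (Module.finrank_fintype_fun_eq_card (ZMod p)).symm
    _ = (T : Set (ι → ZMod p)).finrank (ZMod p) := by rw [Set.finrank, hT, finrank_top]
    _ ≤ T.card := finrank_span_finset_le_card T
    _ ≤ S.card := Finset.card_image_le

end ElementaryAbelian

section RelativelyFree

open FreeGroup

variable {ι : Type*}

theorem FreeGroup.exists_comp_eq_of_surjective {A B : Type*} [Group A] [Group B] {π : A →* B}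
    (hπ : Function.Surjective π) (f : FreeGroup ι →* B) :
    ∃ φ : FreeGroup ι →* A, π.comp φ = f :=
  ⟨FreeGroup.lift fun i => Function.surjInv hπ (f (of i)),
    FreeGroup.ext_hom _ _ fun i => by simp [Function.surjInv_eq hπ]⟩

variable (U : Subgroup (FreeGroup ι)) [U.Normal]

theorem closure_range_mk_of :
    closure (Set.range fun i => ((of i : FreeGroup ι) : FreeGroup ι ⧸ U)) = ⊤ := by
  rw [show Set.range (fun i => ((of i : FreeGroup ι) : FreeGroup ι ⧸ U)) =
      QuotientGroup.mk' U '' Set.range of from Set.range_comp _ _, ← MonoidHom.map_closure,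
    closure_range_of, map_top_of_surjective _ (QuotientGroup.mk'_surjective U)]

theorem hom_ext_mk_of {H : Type*} [Group H] {f g : FreeGroup ι ⧸ U →* H}
    (h : ∀ i, f (of i : FreeGroup ι) = g (of i : FreeGroup ι)) : f = g :=
  QuotientGroup.monoidHom_ext _ (FreeGroup.ext_hom _ _ h)

variable {U}

theorem FullyInvariant.exists_endo_mk_of (hU : FullyInvariant U) (v : ι → FreeGroup ι ⧸ U) :
    ∃ θ : FreeGroup ι ⧸ U →* FreeGroup ι ⧸ U, ∀ i, θ (of i : FreeGroup ι) = v i := by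
  obtain ⟨φ, hφ⟩ :=
    FreeGroup.exists_comp_eq_of_surjective (QuotientGroup.mk'_surjective U) (FreeGroup.lift v)
  have hUφ : U ≤ ((QuotientGroup.mk' U).comp φ).ker := fun u hu =>
    (QuotientGroup.eq_one_iff _).2 (hU φ ⟨u, hu, rfl⟩)
  exact ⟨QuotientGroup.lift U _ hUφ, fun i => by simp [hφ]⟩

variable [Finite (FreeGroup ι ⧸ U)]

theorem FullyInvariant.exists_mulEquiv_lift_frattini (hU : FullyInvariant U)
    (ψ : (FreeGroup ι ⧸ U) ⧸ frattini (FreeGroup ι ⧸ U) ≃*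
      (FreeGroup ι ⧸ U) ⧸ frattini (FreeGroup ι ⧸ U)) :
    ∃ θ : FreeGroup ι ⧸ U ≃* FreeGroup ι ⧸ U, ∀ x,
      ψ (QuotientGroup.mk' _ x) = QuotientGroup.mk' _ (θ x) := by
  choose v hv using fun i : ι => QuotientGroup.mk_surjective (ψ (of i : FreeGroup ι))
  obtain ⟨θ, hθ⟩ := hU.exists_endo_mk_of v
  have hcomm : (QuotientGroup.mk' _).comp θ = ψ.toMonoidHom.comp (QuotientGroup.mk' _) :=
    hom_ext_mk_of U fun i => by simp [hθ, hv]
  have hsurj : Function.Surjective θ := surjective_of_surjective_mk_frattini_comp <| by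
    rw [hcomm]
    exact ψ.surjective.comp (QuotientGroup.mk'_surjective _)
  exact ⟨.ofBijective θ ⟨Finite.injective_iff_surjective.2 hsurj, hsurj⟩,
    fun x => (DFunLike.congr_fun hcomm x).symm⟩

theorem FullyInvariant.card_mulEquiv_trivial_mod [Finite ι] (hU : FullyInvariant U)
    {L : Subgroup (FreeGroup ι ⧸ U)} [L.Normal] (hL : L ≤ frattini (FreeGroup ι ⧸ U)) :
    Nat.card {θ : FreeGroup ι ⧸ U ≃* FreeGroup ι ⧸ U // ∀ x, θ x * x⁻¹ ∈ L} =
      Nat.card L ^ Nat.card ι := by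
  let r (θ : {θ : FreeGroup ι ⧸ U ≃* FreeGroup ι ⧸ U // ∀ x, θ x * x⁻¹ ∈ L}) (i : ι) : L :=
    ⟨θ.1 (of i : FreeGroup ι) * ((of i : FreeGroup ι) : FreeGroup ι ⧸ U)⁻¹, θ.2 _⟩
  have hr : Function.Bijective r := by
    refine ⟨fun θ₁ θ₂ h => ?_, fun ℓ => ?_⟩
    · have h' (i : ι) := congrArg Subtype.val (congrFun h i)
      simp only [r, mul_left_inj] at h'
      exact Subtype.ext (MulEquiv.toMonoidHom_injective (hom_ext_mk_of U h'))
    · obtain ⟨θ, hθ⟩ :=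
        hU.exists_endo_mk_of fun i => (ℓ i : FreeGroup ι ⧸ U) * (of i : FreeGroup ι)
      have hmod : (QuotientGroup.mk' L).comp θ = QuotientGroup.mk' L :=
        hom_ext_mk_of U fun i => by simp [hθ]
      have hL' (x) : θ x * x⁻¹ ∈ L := by
        simpa [QuotientGroup.eq_iff_div_mem, div_eq_mul_inv] using DFunLike.congr_fun hmod x
      have hΦ : (QuotientGroup.mk' (frattini _)).comp θ = QuotientGroup.mk' _ :=
        MonoidHom.ext fun x =>
          QuotientGroup.eq_iff_div_mem.2 (by simpa [div_eq_mul_inv] using hL (hL' x))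
      have hsurj : Function.Surjective θ := surjective_of_surjective_mk_frattini_comp <| by
        rw [hΦ]
        exact QuotientGroup.mk'_surjective _
      refine ⟨⟨.ofBijective θ ⟨Finite.injective_iff_surjective.2 hsurj, hsurj⟩, hL'⟩, ?_⟩
      funext i
      exact Subtype.ext ((mul_left_inj _).2 (hθ i) |>.trans (mul_inv_cancel_right _ _))
  rw [Nat.card_eq_of_bijective r hr, Nat.card_fun]

end RelativelyFree

section FrattiniQuotient

open FreeGroup

variable (p : ℕ) [Fact p.Prime] {ι : Type*} [Fintype ι] [DecidableEq ι]
  {U : Subgroup (FreeGroup ι)} [U.Normal]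

theorem ker_lift_toModP (hU : U ≤ (toModP p ι).ker) :
    (QuotientGroup.lift U (toModP p ι) hU).ker = pStep p ⊤ := by
  rw [QuotientGroup.ker_lift, ker_toModP, map_pStep p (QuotientGroup.mk'_surjective U),
    map_top_of_surjective _ (QuotientGroup.mk'_surjective U)]

theorem frattini_eq_ker_lift_toModP [Finite (FreeGroup ι ⧸ U)]
    (hG : IsPGroup p (FreeGroup ι ⧸ U)) (hU : U ≤ (toModP p ι).ker) :
    frattini (FreeGroup ι ⧸ U) = (QuotientGroup.lift U (toModP p ι) hU).ker :=
  le_antisymm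
    (frattini_le_ker_of_surjective
      (QuotientGroup.lift_surjective_of_surjective _ _ (toModP_surjective p ι) hU))
    (ker_lift_toModP p hU ▸ hG.pStep_top_le_frattini)

noncomputable def quotientFrattiniEquivModP [Finite (FreeGroup ι ⧸ U)]
    (hG : IsPGroup p (FreeGroup ι ⧸ U)) (hU : U ≤ (toModP p ι).ker) :
    (FreeGroup ι ⧸ U) ⧸ frattini (FreeGroup ι ⧸ U) ≃* Multiplicative (ι → ZMod p) :=
  (QuotientGroup.quotientMulEquivOfEq (frattini_eq_ker_lift_toModP p hG hU)).trans
    (QuotientGroup.quotientKerEquivOfSurjective _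
      (QuotientGroup.lift_surjective_of_surjective _ _ (toModP_surjective p ι) hU))

theorem minGenBy_of_le_ker_toModP (hU : U ≤ (toModP p ι).ker) :
    MinGenBy (FreeGroup ι ⧸ U) (Fintype.card ι) := by
  classical
  have hinj : Function.Injective fun i => ((of i : FreeGroup ι) : FreeGroup ι ⧸ U) := by
    intro i j hij
    have := congrFun (congrArg Multiplicative.toAdd
      (congrArg (QuotientGroup.lift U (toModP p ι) hU) hij)) i
    simpa [Pi.single_apply] using this
  refine ⟨⟨Finset.univ.image fun i => (of i : FreeGroup ι), ?_, ?_⟩, fun S hS =>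
    card_le_card_of_surjective_of_closure_eq_top
      (QuotientGroup.lift_surjective_of_surjective _ _ (toModP_surjective p ι) hU) hS⟩
  · rw [Finset.card_image_of_injective _ hinj, Finset.card_univ]
  · simpa using closure_range_mk_of U

theorem FullyInvariant.le_ker_toModP [Finite (FreeGroup ι ⧸ U)] [Nontrivial (FreeGroup ι ⧸ U)]
    (hU : FullyInvariant U) (hG : IsPGroup p (FreeGroup ι ⧸ U)) : U ≤ (toModP p ι).ker := by
  have hW (f : Multiplicative (ι → ZMod p) →* Multiplicative (ι → ZMod p)) :
      (U.map (toModP p ι)).map f ≤ U.map (toModP p ι) := by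
    obtain ⟨φ, hφ⟩ := exists_comp_eq_of_surjective (toModP_surjective p ι) (f.comp (toModP p ι))
    rw [map_map, ← hφ, ← map_map]
    exact map_mono (hU φ)
  rw [← Subgroup.map_eq_bot_iff]
  refine (eq_bot_or_eq_top_of_forall_map_le hW).resolve_right fun htop => ?_
  have hker : (toModP p ι).ker.map (QuotientGroup.mk' U) = ⊤ := by
    refine eq_top_iff.2 fun y _ => ?_
    obtain ⟨x, rfl⟩ := QuotientGroup.mk'_surjective U y
    obtain ⟨u, hu, hux⟩ := htop ▸ mem_top (toModP p ι x)
    refine ⟨u⁻¹ * x, by simp [hux], ?_⟩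
    simp [(QuotientGroup.eq_one_iff u).2 hu]
  rw [ker_toModP, map_pStep p (QuotientGroup.mk'_surjective U),
    map_top_of_surjective _ (QuotientGroup.mk'_surjective U)] at hker
  exact frattini_ne_top (top_le_iff.1 (hker ▸ hG.pStep_top_le_frattini))

end FrattiniQuotient

section GeneralLinear

variable (p : ℕ)

def AddAut.mulEquivZModLinearAut (A : Type*) [AddCommGroup A] [Module (ZMod p) A] :
    Multiplicative (AddAut A) ≃* (A ≃ₗ[ZMod p] A) where
  toFun f :=
    { AddMonoidHom.toZModLinearMap p (f.toAdd : A →+ A) with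
      invFun := f.toAdd.symm
      left_inv := f.toAdd.left_inv
      right_inv := f.toAdd.right_inv }
  invFun ℓ := Multiplicative.ofAdd ℓ.toAddEquiv
  left_inv _ := rfl
  right_inv _ := rfl
  map_mul' _ _ := rfl

noncomputable def mulAutModPEquivGL (ι : Type*) [Fintype ι] [DecidableEq ι] :
    MulAut (Multiplicative (ι → ZMod p)) ≃* GL ι (ZMod p) :=
  ((MulAutMultiplicative _).trans (AddAut.mulEquivZModLinearAut p _)).trans
    (Matrix.GeneralLinearGroup.toLin.trans
      (LinearMap.GeneralLinearGroup.generalLinearEquiv _ _)).symm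

end GeneralLinear

theorem Nat.eq_pow_sub_of_pow_mul_eq {p a b c : ℕ} (hp : p.Prime) (h : p ^ a * c = p ^ b) :
    c = p ^ (b - a) := by
  have hab : a ≤ b := (Nat.pow_dvd_pow_iff_le_right hp.one_lt).1 ⟨c, h.symm⟩
  refine Nat.eq_of_mul_eq_mul_left (pow_pos hp.pos a) ?_
  rw [h, ← pow_add, Nat.add_sub_cancel' hab]

theorem aut_of_relatively_free_pGroup_general (p d g : ℕ) (hp : p.Prime)
    (U : Subgroup (FreeGroup (Fin d))) [U.Normal] (hUfi : FullyInvariant U)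
    (hfin : Finite (FreeGroup (Fin d) ⧸ U))
    (hpg : IsPGroup p (FreeGroup (Fin d) ⧸ U))
    (hnt : Nontrivial (FreeGroup (Fin d) ⧸ U))
    (hcard : Nat.card (FreeGroup (Fin d) ⧸ U) = p ^ g) :
    let F := FreeGroup (Fin d)
    let G := F ⧸ U
    -- (i)
    (U ≤ lowerPSeries p F 2 ∧ MinGenBy G d) ∧
    -- (ii)
    ((∀ ψ : (G ⧸ frattini G) ≃* (G ⧸ frattini G),
        ∃ θ : G ≃* G, ∀ x : G,
          ψ (QuotientGroup.mk' (frattini G) x) = QuotientGroup.mk' (frattini G) (θ x)) ∧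
      Nonempty (((G ⧸ frattini G) ≃* (G ⧸ frattini G)) ≃* GL (Fin d) (ZMod p))) ∧
    -- (iii)
    Nat.card {θ : G ≃* G // ∀ x : G, θ x * x⁻¹ ∈ frattini G} = p ^ (d * (g - d)) ∧
    -- (iv)
    (∀ (L : Subgroup G) (m : ℕ), L.Normal → L ≤ frattini G → Nat.card L = p ^ m →
      Nat.card {θ : G ≃* G // ∀ x : G, θ x * x⁻¹ ∈ L} = p ^ (d * m)) := by
  intro F G
  have : Fact p.Prime := ⟨hp⟩
  have hU := hUfi.le_ker_toModP p hpg
  let e := quotientFrattiniEquivModP p hpg hU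
  have hcount (L : Subgroup G) (m : ℕ) (_ : L.Normal) (hL : L ≤ frattini G)
      (hLm : Nat.card L = p ^ m) : Nat.card {θ : G ≃* G // ∀ x, θ x * x⁻¹ ∈ L} = p ^ (d * m) := by
    rw [hUfi.card_mulEquiv_trivial_mod hL, hLm, Nat.card_fin, ← pow_mul, mul_comm]
  have hΦ : Nat.card (frattini G) = p ^ (g - d) := by
    refine Nat.eq_pow_sub_of_pow_mul_eq hp ?_
    rw [← hcard, card_eq_card_quotient_mul_card_subgroup (frattini G), Nat.card_congr e.toEquiv]
    simp
  refine ⟨⟨hU.trans (FreeGroup.ker_toModP p _).le,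
      by simpa using minGenBy_of_le_ker_toModP p hU⟩,
    ⟨hUfi.exists_mulEquiv_lift_frattini, ⟨(MulAut.congr e).trans (mulAutModPEquivGL p (Fin d))⟩⟩,
    hcount _ _ inferInstance le_rfl hΦ, hcount⟩

/-- **Theorem (automorphisms of a relatively free finite `p`-group).**
Let `F` be free on `d ≥ 1` generators, `U` fully invariant in `F`, and suppose
`G = F/U` is a finite non-trivial `p`-group of order `p^g`.  Then: (i) `U ≤ F₂` and `G`
is minimally generated by `d` elements; (ii) `Aut(G) → Aut(G/Φ(G))` is surjective and
`Aut(G/Φ(G)) ≅ GL(d,𝔽_p)`; (iii) the kernel `K(G)` — the automorphisms acting trivially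
on `G/Φ(G)` — has order `p^{d(g-d)}`; and (iv) for any normal `L ≤ Φ(G)` of order `p^m`,
exactly `p^{dm}` automorphisms of `G` act trivially on `G/L`. -/
theorem aut_of_relatively_free_pGroup (p d g : ℕ) (hp : p.Prime) (hd : 1 ≤ d)
    (U : Subgroup (FreeGroup (Fin d))) [U.Normal] (hUfi : FullyInvariant U)
    (hfin : Finite (FreeGroup (Fin d) ⧸ U))
    (hpg : IsPGroup p (FreeGroup (Fin d) ⧸ U))
    (hnt : Nontrivial (FreeGroup (Fin d) ⧸ U))
    (hcard : Nat.card (FreeGroup (Fin d) ⧸ U) = p ^ g) :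
    let F := FreeGroup (Fin d)
    let G := F ⧸ U
    -- (i)
    (U ≤ lowerPSeries p F 2 ∧ MinGenBy G d) ∧
    -- (ii)
    ((∀ ψ : (G ⧸ frattini G) ≃* (G ⧸ frattini G),
        ∃ θ : G ≃* G, ∀ x : G,
          ψ (QuotientGroup.mk' (frattini G) x) = QuotientGroup.mk' (frattini G) (θ x)) ∧
      Nonempty (((G ⧸ frattini G) ≃* (G ⧸ frattini G)) ≃* GL (Fin d) (ZMod p))) ∧
    -- (iii)
    Nat.card {θ : G ≃* G // ∀ x : G, θ x * x⁻¹ ∈ frattini G} = p ^ (d * (g - d)) ∧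
    -- (iv)
    (∀ (L : Subgroup G) (m : ℕ), L.Normal → L ≤ frattini G → Nat.card L = p ^ m →
      Nat.card {θ : G ≃* G // ∀ x : G, θ x * x⁻¹ ∈ L} = p ^ (d * m)) :=
  aut_of_relatively_free_pGroup_general p d g hp U hUfi hfin hpg hnt hcard
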